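/- arXiv:2602.06467 — 3 statements merged into one kernel-verified Lean document; each statement's English description precedes it below -/
import Mathlib

section
/- The binary reflected Gray code γ^g_n is exactly 1-preserving: γ^g_n is 1-preserving, and for n ≥ 2 it is not 2-preserving. -/
/-- Resolution of a ternary word (`none` is the metastable value `M`). -/
def res {n : ℕ} (x : Fin n → Option Bool) : Set (Fin n → Bool) :=
  {y | ∀ j : Fin n, ∀ b : Bool, x j = some b → y j = b}

open Classical in
/-- Extended codeword: pointwise superposition of all codewords `γ a`, `a ∈ I`. -/
noncomputable def extCW {M n : ℕ} (γ : Fin M → Fin n → Bool) (I : Set (Fin M)) :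
    Fin n → Option Bool :=
  fun j =>
    if ∀ a ∈ I, γ a j = true then some true
    else if ∀ a ∈ I, γ a j = false then some false
    else none

/-- The interval `⟨i, i+p⟩ = {i, ..., i+p}` inside `{0, ..., M-1}`. -/
def intvl (M i p : ℕ) : Set (Fin M) := {a : Fin M | i ≤ a.val ∧ a.val ≤ i + p}

/-- A code is `k`-preserving if for every interval `⟨i,i+p⟩` with `p ≤ k`,
the codewords in the resolution of the extended codeword are exactly the
codewords of the interval. -/
def Preserving {M n : ℕ} (γ : Fin M → Fin n → Bool) (k : ℕ) : Prop :=
  ∀ i p : ℕ, p ≤ k → i + p < M →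
    Set.range γ ∩ res (extCW γ (intvl M i p)) = γ '' (intvl M i p)

/-- The binary reflected Gray code, position `0` is the most significant bit. -/
def brgc : (n : ℕ) → Fin (2^n) → Fin n → Bool
  | 0 => fun _ => fun i => i.elim0
  | n+1 => fun i =>
      if h : i.val < 2^n then Fin.cons false (brgc n ⟨i.val, h⟩)
      else Fin.cons true (brgc n ⟨2^(n+1) - i.val - 1, by
        have h1 := i.isLt
        have h2 : (2:ℕ)^(n+1) = 2^n * 2 := pow_succ 2 n
        omega⟩)

/-! Consecutive codewords of the reflected Gray code differ in exactly one bit, and the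
superposition of two words at Hamming distance at most one resolves to exactly those two words,
which gives 1-preservation. For `n ≥ 2` the first three codewords `0…000, 0…001, 0…011`
superpose to `0…0MM`, whose resolution also contains the codeword `0…010` of `3`. -/

theorem hammingDist_cons {n : ℕ} {β : Type*} [DecidableEq β] (a b : β) (x y : Fin n → β) :
    hammingDist (Fin.cons a x : Fin (n + 1) → β) (Fin.cons b y) =
      (if a = b then 0 else 1) + hammingDist x y := by
  simp only [hammingDist, Finset.card_filter, Fin.sum_univ_succ, Fin.cons_zero, Fin.cons_succ]
  split_ifs <;> simp_all

theorem eq_or_eq_of_hammingDist_le_one {ι β : Type*} [Fintype ι] [DecidableEq β]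
    {x y z : ι → β} (hxz : hammingDist x z ≤ 1) (hy : ∀ j, y j = x j ∨ y j = z j) :
    y = x ∨ y = z := by
  by_contra! hne
  obtain ⟨j, hj⟩ := Function.ne_iff.mp hne.1
  obtain ⟨k, hk⟩ := Function.ne_iff.mp hne.2
  have hyj : y j = z j := (hy j).resolve_left hj
  have hyk : y k = x k := (hy k).resolve_right hk
  have hjk : j = k := Finset.card_le_one.mp hxz j (by simp [← hyj, Ne.symm hj]) k
    (by simp [← hyk, hk])
  exact hk (hjk ▸ hyj)

section ExtendedCodeword

variable {M n : ℕ} {γ : Fin M → Fin n → Bool} {I : Set (Fin M)}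

theorem extCW_eq_some_iff (hI : I.Nonempty) {j : Fin n} {b : Bool} :
    extCW γ I j = some b ↔ ∀ a ∈ I, γ a j = b := by
  unfold extCW
  cases b <;> split_ifs <;> simp_all [Set.Nonempty]

theorem mem_res_extCW_iff (hI : I.Nonempty) {y : Fin n → Bool} :
    y ∈ res (extCW γ I) ↔ ∀ j, ∃ a ∈ I, γ a j = y j := by
  simp only [res, Set.mem_ofPred_eq, extCW_eq_some_iff hI]
  constructor
  · intro hy j
    by_contra! hne
    simpa using hy j (!y j) fun a ha => Bool.eq_not.mpr (hne a ha)
  · rintro hy j b hb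
    obtain ⟨a, ha, hay⟩ := hy j
    rw [← hay, hb a ha]

theorem res_extCW_singleton (a : Fin M) : res (extCW γ {a}) = {γ a} := by
  ext y
  simp [mem_res_extCW_iff, funext_iff, eq_comm]

theorem res_extCW_pair {a b : Fin M} (h : hammingDist (γ a) (γ b) ≤ 1) :
    res (extCW γ {a, b}) = {γ a, γ b} := by
  ext y
  simp only [mem_res_extCW_iff (Set.insert_nonempty a {b}), Set.mem_insert_iff,
    Set.mem_singleton_iff, exists_eq_or_imp, exists_eq_left]
  constructor
  · exact fun hy => eq_or_eq_of_hammingDist_le_one h fun j => (hy j).imp Eq.symm Eq.symm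
  · rintro (rfl | rfl) j <;> simp

end ExtendedCodeword

theorem intvl_zero {M i : ℕ} (h : i < M) : intvl M i 0 = {⟨i, h⟩} := by
  ext a
  simp only [intvl, add_zero, Set.mem_ofPred_eq, Set.mem_singleton_iff, Fin.ext_iff]
  omega

theorem intvl_one {M i : ℕ} (h : i + 1 < M) : intvl M i 1 = {⟨i, by omega⟩, ⟨i + 1, h⟩} := by
  ext a
  simp only [intvl, Set.mem_ofPred_eq, Set.mem_insert_iff, Fin.ext_iff, Set.mem_singleton_iff]
  omega

section Preserving

variable {M n : ℕ} {γ : Fin M → Fin n → Bool}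

theorem preserving_one_of_hammingDist_le_one
    (hγ : ∀ i (h : i + 1 < M), hammingDist (γ ⟨i, by omega⟩) (γ ⟨i + 1, h⟩) ≤ 1) :
    Preserving γ 1 := by
  intro i p hp hip
  suffices res (extCW γ (intvl M i p)) = γ '' intvl M i p by
    rw [this, Set.inter_eq_right.mpr (Set.image_subset_range _ _)]
  interval_cases p
  · rw [intvl_zero (by omega), Set.image_singleton, res_extCW_singleton]
  · rw [intvl_one hip, Set.image_pair, res_extCW_pair (hγ i hip)]

theorem not_preserving_of_mem_res (hγ : Function.Injective γ) {i p k : ℕ} (hp : p ≤ k)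
    (hip : i + p < M) {c : Fin M} (hc : c ∉ intvl M i p)
    (hres : γ c ∈ res (extCW γ (intvl M i p))) : ¬ Preserving γ k := by
  intro hP
  have hmem : γ c ∈ γ '' intvl M i p := hP i p hp hip ▸ ⟨Set.mem_range_self c, hres⟩
  exact hc (hγ.mem_set_image.mp hmem)

end Preserving

section BRGC

variable {n : ℕ}

theorem brgc_succ_of_val_eq {a : Fin (2 ^ (n + 1))} {b : Fin (2 ^ n)} (h : a.val = b.val) :
    brgc (n + 1) a = Fin.cons false (brgc n b) := by
  rw [brgc]
  dsimp only
  rw [dif_pos (h ▸ b.isLt)]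
  congr

theorem brgc_succ_of_add_eq {a : Fin (2 ^ (n + 1))} {b : Fin (2 ^ n)}
    (h : a.val + b.val + 1 = 2 ^ (n + 1)) : brgc (n + 1) a = Fin.cons true (brgc n b) := by
  have hb := b.isLt
  have hpow : 2 ^ (n + 1) = 2 * 2 ^ n := by ring
  rw [brgc]
  dsimp only
  rw [dif_neg (by omega)]
  congr
  omega

theorem brgc_succ_cases (a : Fin (2 ^ (n + 1))) :
    ∃ b : Fin (2 ^ n), (a.val = b.val ∧ brgc (n + 1) a = Fin.cons false (brgc n b)) ∨
      (a.val + b.val + 1 = 2 ^ (n + 1) ∧ brgc (n + 1) a = Fin.cons true (brgc n b)) := by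
  have ha := a.isLt
  have hpow : 2 ^ (n + 1) = 2 * 2 ^ n := by ring
  by_cases h : a.val < 2 ^ n
  · exact ⟨⟨a, h⟩, .inl ⟨rfl, brgc_succ_of_val_eq rfl⟩⟩
  · have hsum : a.val + (2 ^ (n + 1) - a - 1) + 1 = 2 ^ (n + 1) := by omega
    exact ⟨⟨2 ^ (n + 1) - a - 1, by omega⟩, .inr ⟨hsum, brgc_succ_of_add_eq hsum⟩⟩

theorem brgc_injective (n : ℕ) : Function.Injective (brgc n) := by
  induction n with
  | zero => exact fun a b _ => Fin.ext (by omega)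
  | succ n ih =>
    intro a b hab
    have hpow : 2 ^ (n + 1) = 2 * 2 ^ n := by ring
    obtain ⟨a', ha | ha⟩ := brgc_succ_cases a <;> obtain ⟨b', hb | hb⟩ := brgc_succ_cases b <;>
      rw [ha.2, hb.2, Fin.cons_inj] at hab <;> obtain ⟨hhead, htail⟩ := hab <;>
      cases hhead <;> have := congrArg Fin.val (ih htail) <;> exact Fin.ext (by omega)

theorem hammingDist_brgc_succ (n i : ℕ) (h : i + 1 < 2 ^ n) :
    hammingDist (brgc n ⟨i, by omega⟩) (brgc n ⟨i + 1, h⟩) = 1 := by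
  induction n generalizing i with
  | zero => simp at h
  | succ n ih =>
    have hpow : 2 ^ (n + 1) = 2 * 2 ^ n := by ring
    rcases lt_trichotomy (i + 1) (2 ^ n) with hlt | heq | hgt
    · rw [brgc_succ_of_val_eq (b := ⟨i, by omega⟩) rfl, brgc_succ_of_val_eq (b := ⟨i + 1, hlt⟩) rfl,
        hammingDist_cons, ih i hlt]
      simp
    · -- the reflection: codeword `2^n - 1` is mirrored onto codeword `2^n`
      rw [brgc_succ_of_val_eq (b := ⟨i, by omega⟩) rfl,
        brgc_succ_of_add_eq (b := ⟨i, by omega⟩) (by simp only; omega), hammingDist_cons,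
        hammingDist_self]
      simp
    · have hk : 2 ^ (n + 1) - i - 2 + 1 < 2 ^ n := by omega
      rw [brgc_succ_of_add_eq (b := ⟨_, hk⟩) (by simp only; omega),
        brgc_succ_of_add_eq (b := ⟨2 ^ (n + 1) - i - 2, by omega⟩) (by simp only; omega),
        hammingDist_cons, hammingDist_comm, ih _ hk]
      simp

theorem brgc_three_eq_zero_or_two (n : ℕ) (h : 3 < 2 ^ n) (j : Fin n) :
    brgc n ⟨3, h⟩ j = brgc n ⟨0, by omega⟩ j ∨ brgc n ⟨3, h⟩ j = brgc n ⟨2, by omega⟩ j := by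
  induction n with
  | zero => norm_num at h
  | succ n ih =>
    by_cases h' : 3 < 2 ^ n
    · rw [brgc_succ_of_val_eq (b := ⟨3, h'⟩) rfl, brgc_succ_of_val_eq (b := ⟨0, by omega⟩) rfl,
        brgc_succ_of_val_eq (b := ⟨2, by omega⟩) rfl]
      cases j using Fin.cases with
      | zero => simp
      | succ k => simpa using ih h' k
    · obtain rfl : n = 1 := by
        have h1 : 2 ^ 1 < 2 ^ (n + 1) := by omega
        have h2 : 2 ^ n < 2 ^ 2 := by omega
        rw [Nat.pow_lt_pow_iff_right (by norm_num)] at h1 h2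
        omega
      revert h j
      decide

end BRGC

/-- The binary reflected Gray code is exactly `1`-preserving: it is
`1`-preserving, and for `n ≥ 2` it is not `2`-preserving. -/
theorem brgc_exactly_one_preserving (n : ℕ) :
    Preserving (brgc n) 1 ∧ (2 ≤ n → ¬ Preserving (brgc n) 2) := by
  refine ⟨preserving_one_of_hammingDist_le_one fun i h => (hammingDist_brgc_succ n i h).le,
    fun hn => ?_⟩
  have h3 : 3 < 2 ^ n := lt_of_lt_of_le (by norm_num) (Nat.pow_le_pow_right two_pos hn)
  refine not_preserving_of_mem_res (brgc_injective n) (i := 0) le_rfl (by omega) (c := ⟨3, h3⟩)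
    (by simp [intvl]) ?_
  rw [mem_res_extCW_iff ⟨⟨0, by omega⟩, by simp [intvl]⟩]
  intro j
  rcases brgc_three_eq_zero_or_two n h3 j with h0 | h2
  · exact ⟨_, by simp [intvl], h0.symm⟩
  · exact ⟨_, by simp [intvl], h2.symm⟩
end

section
/- For all n, k ∈ ℕ with n ≥ k ≥ 1, the hybrid code γ^h_{n,k} is ⌈k/2⌉-recoverable. -/
/-- A code is `k`-recoverable if some extension `dec` of the decoding function
maps every resolution of the extended codeword of an interval of imprecision
at most `k` back into that interval. -/
def Recoverable {M n : ℕ} (γ : Fin M → Fin n → Bool) (k : ℕ) : Prop :=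
  ∃ dec : (Fin n → Bool) → Fin M,
    (∀ v : Fin M, dec (γ v) = v) ∧
    ∀ i p : ℕ, p ≤ k → i + p < M →
      ∀ y ∈ res (extCW γ (intvl M i p)), dec y ∈ intvl M i p

/-- Unary thermometer codeword `1^m 0^(k-m)`. -/
def unary (k m : ℕ) : Fin k → Bool := fun j => decide (j.val < m)

/-- Unary thermometer codeword `0^m 1^(k-m)`. -/
def unaryBar (k m : ℕ) : Fin k → Bool := fun j => decide (m ≤ j.val)

/-- Parity of a Boolean word: `true` iff the number of `1`s is odd. -/
def parityW {m : ℕ} (x : Fin m → Bool) : Bool :=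
  decide ((Finset.univ.filter (fun i : Fin m => x i = true)).card % 2 = 1)

/-- The hybrid code `γ^h_{n,k}`: an `n`-bit BRGC part followed by a `k`-bit
unary part whose flavor is selected by the parity of the BRGC part. -/
def hybrid (n k : ℕ) : Fin (2^n * (k+1)) → Fin (n + k) → Bool :=
  fun i =>
    let xg : Fin n → Bool := brgc n ⟨i.val / (k+1), Nat.div_lt_of_lt_mul (mul_comm (2^n) (k+1) ▸ i.isLt)⟩
    let xu : Fin k → Bool :=
      if parityW xg = false then unary k (i.val % (k+1)) else unaryBar k (i.val % (k+1))
    Fin.append xg xu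

theorem mem_res_extCW {M n : ℕ} {γ : Fin M → Fin n → Bool} {I : Set (Fin M)} {a : Fin M}
    (ha : a ∈ I) : γ a ∈ res (extCW γ I) := by
  intro j b hb
  unfold extCW at hb
  split_ifs at hb with h₁ h₂ <;> cases hb
  · exact h₁ a ha
  · exact h₂ a ha

theorem apply_eq_of_mem_res_extCW {M n : ℕ} {γ : Fin M → Fin n → Bool} {I : Set (Fin M)}
    {y : Fin n → Bool} (hy : y ∈ res (extCW γ I)) (hI : I.Nonempty) {j : Fin n} {b : Bool}
    (h : ∀ a ∈ I, γ a j = b) : y j = b := by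
  obtain ⟨a₀, ha₀⟩ := hI
  apply hy j b
  unfold extCW
  cases b
  · rw [if_neg fun ht => by simpa [h a₀ ha₀] using ht a₀ ha₀, if_pos h]
  · rw [if_pos h]

theorem eq_or_eq_update_not {ι : Type*} [DecidableEq ι] {x y : ι → Bool} {j₀ : ι}
    (h : ∀ j ≠ j₀, y j = x j) : y = x ∨ y = Function.update x j₀ (!x j₀) := by
  have hy : y = Function.update x j₀ (y j₀) :=
    (Function.update_eq_iff.2 ⟨rfl, fun j hj => (h j hj).symm⟩).symm
  cases hb : y j₀ <;> cases hx : x j₀ <;> rw [hb] at hy <;> simp_all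

theorem parityW_update_not {m : ℕ} (x : Fin m → Bool) (j : Fin m) :
    parityW (Function.update x j (!x j)) = !parityW x := by
  unfold parityW
  set S := Finset.univ.filter fun i => x i = true
  cases hx : x j <;> simp only [Bool.not_false, Bool.not_true]
  · have hS : Finset.univ.filter (fun i => Function.update x j true i = true) = insert j S := by
      ext i; by_cases hi : i = j <;> simp [S, Function.update_apply, hi]
    rw [hS, Finset.card_insert_of_notMem (by simp [S, hx])]
    rcases Nat.mod_two_eq_zero_or_one S.card with h | h <;> simp [Nat.add_mod, h]
  · have hS : Finset.univ.filter (fun i => Function.update x j false i = true) = S.erase j := by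
      ext i; by_cases hi : i = j <;> simp [S, Function.update_apply, hi]
    have hj : j ∈ S := by simp [S, hx]
    rw [hS, Finset.card_erase_of_mem hj]
    have := Finset.card_pos.2 ⟨j, hj⟩
    rcases Nat.mod_two_eq_zero_or_one S.card with h | h <;> simp [h] <;> omega

def brgcInv : (n : ℕ) → (Fin n → Bool) → ℕ
  | 0, _ => 0
  | n + 1, x =>
    if x 0 then 2 ^ (n + 1) - 1 - brgcInv n (Fin.tail x) else brgcInv n (Fin.tail x)

theorem brgcInv_lt (n : ℕ) (x : Fin n → Bool) : brgcInv n x < 2 ^ n := by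
  induction n with
  | zero => simp [brgcInv]
  | succ n ih =>
    have := ih (Fin.tail x)
    rw [brgcInv, pow_succ]
    split <;> omega

theorem brgcInv_brgc (n : ℕ) (i : Fin (2 ^ n)) : brgcInv n (brgc n i) = i := by
  induction n with
  | zero => simp [brgcInv]
  | succ n ih =>
    have hpow := pow_succ 2 n
    have hi := i.isLt
    unfold brgc
    split_ifs with h
    · simp [brgcInv, ih]
    · simp [brgcInv, ih]
      omega

theorem brgc_succ_eq_update (n q : ℕ) (h : q + 1 < 2 ^ n) :
    ∃ j₀, brgc n ⟨q + 1, h⟩ =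
      Function.update (brgc n ⟨q, by omega⟩) j₀ (!brgc n ⟨q, by omega⟩ j₀) := by
  induction n generalizing q with
  | zero => simp at h
  | succ n ih =>
    have hpow := pow_succ 2 n
    rcases lt_trichotomy (q + 1) (2 ^ n) with hq | hq | hq
    · obtain ⟨j₀, hj₀⟩ := ih q hq
      refine ⟨j₀.succ, ?_⟩
      simp only [brgc, dif_pos hq, dif_pos (by omega : q < 2 ^ n), hj₀, Fin.cons_update,
        Fin.cons_succ]
    · refine ⟨0, ?_⟩
      have e : (⟨2 ^ (n + 1) - (q + 1) - 1, by omega⟩ : Fin (2 ^ n)) = ⟨q, by omega⟩ :=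
        Fin.ext (by simp only; omega)
      simp only [brgc, dif_neg (by omega : ¬q + 1 < 2 ^ n), dif_pos (by omega : q < 2 ^ n),
        Fin.update_cons_zero, Fin.cons_zero, e, Bool.not_false]
    · obtain ⟨j₀, hj₀⟩ := ih (2 ^ (n + 1) - q - 2) (by omega)
      refine ⟨j₀.succ, ?_⟩
      have e₁ : (⟨2 ^ (n + 1) - (q + 1) - 1, by omega⟩ : Fin (2 ^ n)) =
          ⟨2 ^ (n + 1) - q - 2, by omega⟩ := Fin.ext (by simp only; omega)
      have e₂ : (⟨2 ^ (n + 1) - q - 1, by omega⟩ : Fin (2 ^ n)) =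
          ⟨2 ^ (n + 1) - q - 2 + 1, by omega⟩ := Fin.ext (by simp only; omega)
      simp only [brgc, dif_neg (by omega : ¬q + 1 < 2 ^ n), dif_neg (by omega : ¬q < 2 ^ n),
        e₁, e₂, hj₀, Fin.cons_update]
      simp

theorem parityW_brgc_succ (n q : ℕ) (h : q + 1 < 2 ^ n) :
    parityW (brgc n ⟨q + 1, h⟩) = !parityW (brgc n ⟨q, by omega⟩) := by
  obtain ⟨j₀, hj₀⟩ := brgc_succ_eq_update n q h
  rw [hj₀, parityW_update_not]

def thermoDecode (k : ℕ) (u : ℕ → Bool) : ℕ :=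
  if u (k / 2) then
    Nat.find (p := fun e => k / 2 ≤ e ∧ (k ≤ e ∨ u e = false))
      ⟨k, Nat.div_le_self k 2, .inl le_rfl⟩
  else
    Nat.find (p := fun s => ∀ j, s ≤ j → j < k / 2 → u j = false)
      ⟨k / 2, fun _ h h' => absurd h' (Nat.not_lt.2 h)⟩

theorem thermoDecode_le (k : ℕ) (u : ℕ → Bool) : thermoDecode k u ≤ k := by
  unfold thermoDecode
  split
  · exact Nat.find_min' _ ⟨Nat.div_le_self k 2, .inl le_rfl⟩
  · exact (Nat.find_min' _ fun _ h h' => absurd h' (Nat.not_lt.2 h)).trans (Nat.div_le_self k 2)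

theorem le_thermoDecode_of_forall_true {k : ℕ} {u : ℕ → Bool} {a b : ℕ} (hab : a < b)
    (ha : a ≤ k / 2) (hb : b ≤ k) (h : ∀ j, a ≤ j → j < b → u j = true) :
    b ≤ thermoDecode k u := by
  unfold thermoDecode
  split
  · refine (Nat.le_find_iff _ _).2 fun e he ⟨hme, hke⟩ => ?_
    rcases hke with hke | hue
    · omega
    · simp [h e (by omega) he] at hue
  · rename_i hm
    have hbm : b ≤ k / 2 := by
      by_contra! hbm
      exact hm (h _ ha hbm)
    refine (Nat.le_find_iff _ _).2 fun s hs hfalse => ?_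
    simpa [h (b - 1) (by omega) (by omega)] using hfalse (b - 1) (by omega) (by omega)

theorem thermoDecode_le_of_forall_false {k : ℕ} {u : ℕ → Bool} {a b : ℕ} (hab : a < b)
    (hb : k / 2 < b) (h : ∀ j, a ≤ j → j < b → u j = false) : thermoDecode k u ≤ a := by
  unfold thermoDecode
  split
  · rename_i hm
    have ham : k / 2 ≤ a := by
      by_contra! ham
      simp [h _ ham.le hb] at hm
    exact Nat.find_min' _ ⟨ham, .inr (h a le_rfl hab)⟩
  · exact Nat.find_min' _ fun j hj hjm => h j hj (by omega)

theorem thermoDecode_mem_Icc {k : ℕ} {u : ℕ → Bool} {r p : ℕ} (hrp : r + p ≤ k)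
    (hlow : ∀ j < r, u j = true) (hhigh : ∀ j, r + p ≤ j → j < k → u j = false) :
    thermoDecode k u ∈ Set.Icc r (r + p) := by
  refine ⟨?_, ?_⟩
  · rcases Nat.eq_zero_or_pos r with hr | hr
    · omega
    · exact le_thermoDecode_of_forall_true hr (Nat.zero_le _) (by omega) fun j _ hj => hlow j hj
  · rcases hrp.eq_or_lt with hrp | hrp
    · exact hrp ▸ thermoDecode_le k u
    · exact thermoDecode_le_of_forall_false hrp (by omega) hhigh

theorem div_mod_cases_of_mem_Icc {k q r p a : ℕ} (hr : r ≤ k) (hp : p ≤ k)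
    (ha : a ∈ Set.Icc (q * (k + 1) + r) (q * (k + 1) + r + p)) :
    (a / (k + 1) = q ∧ r ≤ a % (k + 1) ∧ a % (k + 1) ≤ r + p) ∨
      (a / (k + 1) = q + 1 ∧ a % (k + 1) + (k + 1) ≤ r + p) := by
  obtain ⟨h₁, h₂⟩ := ha
  obtain ⟨c, rfl⟩ : ∃ c, a = c + q * (k + 1) := ⟨a - q * (k + 1), by omega⟩
  rw [Nat.add_mul_div_right _ _ k.succ_pos, Nat.add_mul_mod_self_right]
  rcases lt_or_ge c (k + 1) with hc | hc
  · left
    rw [Nat.div_eq_of_lt hc, Nat.mod_eq_of_lt hc]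
    omega
  · right
    obtain ⟨c, rfl⟩ : ∃ c', c = c' + (k + 1) := ⟨c - (k + 1), by omega⟩
    rw [Nat.add_div_right _ k.succ_pos, Nat.add_mod_right, Nat.div_eq_of_lt (by omega),
      Nat.mod_eq_of_lt (by omega)]
    omega

section Hybrid

variable {n k : ℕ}

theorem hybrid_castAdd (a : Fin (2 ^ n * (k + 1))) (j : Fin n) :
    hybrid n k a (Fin.castAdd k j) = brgc n a.divNat j := by
  simp [hybrid, Fin.divNat]

theorem hybrid_natAdd (a : Fin (2 ^ n * (k + 1))) (j : Fin k) :
    hybrid n k a (Fin.natAdd n j) =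
      xor (parityW (brgc n a.divNat)) (decide (j.val < a.val % (k + 1))) := by
  change Fin.append (brgc n a.divNat) (if parityW (brgc n a.divNat) = false then
    unary k (a % (k + 1)) else unaryBar k (a % (k + 1))) (Fin.natAdd n j) = _
  cases parityW (brgc n a.divNat)
  · simp [unary]
  · simp [unaryBar, ← decide_not]

theorem hybrid_natAdd_eq_not_parityW {q : ℕ} (hq : q + 1 < 2 ^ n) {a : Fin (2 ^ n * (k + 1))}
    {j : Fin k} (h : (a.divNat = ⟨q, by omega⟩ ∧ j.val < a.val % (k + 1)) ∨
      (a.divNat = ⟨q + 1, hq⟩ ∧ a.val % (k + 1) ≤ j.val)) :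
    hybrid n k a (Fin.natAdd n j) = !parityW (brgc n ⟨q, by omega⟩) := by
  rcases h with ⟨hd, hj⟩ | ⟨hd, hj⟩
  · rw [hybrid_natAdd, hd, decide_eq_true hj, Bool.xor_true]
  · rw [hybrid_natAdd, hd, parityW_brgc_succ, decide_eq_false (Nat.not_lt.2 hj), Bool.xor_false]

def grayPart (y : Fin (n + k) → Bool) : Fin n → Bool := fun j => y (Fin.castAdd k j)

def unaryPart (b : Bool) (y : Fin (n + k) → Bool) (j : ℕ) : Bool :=
  if h : j < k then xor b (y (Fin.natAdd n ⟨j, h⟩)) else false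

def hybridDecode (n k : ℕ) (y : Fin (n + k) → Bool) : Fin (2 ^ n * (k + 1)) :=
  Fin.mkDivMod ⟨brgcInv n (grayPart y), brgcInv_lt n (grayPart y)⟩
    ⟨thermoDecode k (unaryPart (parityW (grayPart y)) y),
      Nat.lt_succ_of_le (thermoDecode_le _ _)⟩

variable {y : Fin (n + k) → Bool}

theorem hybridDecode_val_of_grayPart_eq {q : Fin (2 ^ n)} (hq : grayPart y = brgc n q) :
    (hybridDecode n k y : ℕ) =
      q * (k + 1) + thermoDecode k (unaryPart (parityW (brgc n q)) y) := by
  simp [hybridDecode, hq, brgcInv_brgc, Nat.mul_comm]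

variable {I : Set (Fin (2 ^ n * (k + 1)))}

theorem grayPart_eq_of_mem_res (hy : y ∈ res (extCW (hybrid n k) I)) (hI : I.Nonempty)
    {q : Fin (2 ^ n)} (h : ∀ a ∈ I, a.divNat = q) : grayPart y = brgc n q :=
  funext fun j => apply_eq_of_mem_res_extCW hy hI fun a ha => by rw [hybrid_castAdd, h a ha]

theorem grayPart_eq_or_eq_of_mem_res (hy : y ∈ res (extCW (hybrid n k) I)) (hI : I.Nonempty)
    {q : ℕ} (hq : q + 1 < 2 ^ n)
    (h : ∀ a ∈ I, a.divNat = ⟨q, by omega⟩ ∨ a.divNat = ⟨q + 1, hq⟩) :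
    grayPart y = brgc n ⟨q, by omega⟩ ∨ grayPart y = brgc n ⟨q + 1, hq⟩ := by
  obtain ⟨j₀, hj₀⟩ := brgc_succ_eq_update n q hq
  rw [hj₀]
  refine eq_or_eq_update_not fun j hj => apply_eq_of_mem_res_extCW hy hI fun a ha => ?_
  rcases h a ha with hd | hd
  · rw [hybrid_castAdd, hd]
  · rw [hybrid_castAdd, hd, hj₀, Function.update_of_ne hj]

theorem unaryPart_eq_of_mem_res
    (hy : y ∈ res (extCW (hybrid n k) I)) (hI : I.Nonempty) {b c : Bool} {j : ℕ} (hj : j < k)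
    (h : ∀ a ∈ I, hybrid n k a (Fin.natAdd n ⟨j, hj⟩) = xor b c) : unaryPart b y j = c := by
  rw [unaryPart, dif_pos hj, apply_eq_of_mem_res_extCW hy hI h]
  simp

theorem hybridDecode_mem_intvl_of_add_le {q r p : ℕ} (hq : q < 2 ^ n) (hrp : r + p ≤ k)
    (hy : y ∈ res (extCW (hybrid n k) (intvl (2 ^ n * (k + 1)) (q * (k + 1) + r) p))) :
    hybridDecode n k y ∈ intvl (2 ^ n * (k + 1)) (q * (k + 1) + r) p := by
  set I := intvl (2 ^ n * (k + 1)) (q * (k + 1) + r) p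
  have hqk : (q + 1) * (k + 1) ≤ 2 ^ n * (k + 1) := Nat.mul_le_mul_right _ hq
  rw [Nat.succ_mul] at hqk
  have hI : I.Nonempty := ⟨⟨q * (k + 1) + r, by omega⟩, le_rfl, Nat.le_add_right _ _⟩
  have hblock : ∀ a ∈ I,
      a.divNat = ⟨q, hq⟩ ∧ r ≤ a.val % (k + 1) ∧ a.val % (k + 1) ≤ r + p := by
    intro a ha
    rcases div_mod_cases_of_mem_Icc (by omega) (by omega) ha with ⟨hd, hm⟩ | ⟨_, hm⟩
    · exact ⟨Fin.ext hd, hm⟩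
    · omega
  have hgray := grayPart_eq_of_mem_res hy hI fun a ha => (hblock a ha).1
  obtain ⟨ht₁, ht₂⟩ :=
    thermoDecode_mem_Icc (u := unaryPart (parityW (brgc n ⟨q, hq⟩)) y) hrp
    (fun j hj => unaryPart_eq_of_mem_res hy hI (by omega) fun a ha => by
      obtain ⟨hd, hm, -⟩ := hblock a ha
      rw [hybrid_natAdd, hd, decide_eq_true (by simp only; omega)])
    (fun j hj hjk => unaryPart_eq_of_mem_res hy hI hjk fun a ha => by
      obtain ⟨hd, -, hm⟩ := hblock a ha
      rw [hybrid_natAdd, hd, decide_eq_false (by simp only; omega)])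
  show _ ≤ _ ∧ _ ≤ _
  rw [hybridDecode_val_of_grayPart_eq hgray]
  simp only
  omega

theorem hybridDecode_mem_intvl_of_lt_add {q r p : ℕ} (hq : q + 1 < 2 ^ n) (hr : r ≤ k)
    (hp : p ≤ (k + 1) / 2) (hrp : k < r + p)
    (hy : y ∈ res (extCW (hybrid n k) (intvl (2 ^ n * (k + 1)) (q * (k + 1) + r) p))) :
    hybridDecode n k y ∈ intvl (2 ^ n * (k + 1)) (q * (k + 1) + r) p := by
  set I := intvl (2 ^ n * (k + 1)) (q * (k + 1) + r) p
  set r₁ := r + p - (k + 1)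
  have hqk : (q + 1) * (k + 1) < 2 ^ n * (k + 1) := Nat.mul_lt_mul_of_pos_right hq k.succ_pos
  rw [Nat.succ_mul] at hqk
  have hI : I.Nonempty := ⟨⟨q * (k + 1) + r, by omega⟩, le_rfl, Nat.le_add_right _ _⟩
  have hblock : ∀ a ∈ I, (a.divNat = ⟨q, by omega⟩ ∧ r ≤ a.val % (k + 1)) ∨
      (a.divNat = ⟨q + 1, hq⟩ ∧ a.val % (k + 1) ≤ r₁) := by
    intro a ha
    rcases div_mod_cases_of_mem_Icc hr (by omega) ha with ⟨hd, hm, -⟩ | ⟨hd, hm⟩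
    · exact .inl ⟨Fin.ext hd, hm⟩
    · exact .inr ⟨Fin.ext hd, by omega⟩
  have hgray :=
    grayPart_eq_or_eq_of_mem_res hy hI hq fun a ha => (hblock a ha).imp And.left And.left
  have hwindow : ∀ j (hj : j < k), r₁ ≤ j → j < r → ∀ a ∈ I,
      hybrid n k a (Fin.natAdd n ⟨j, hj⟩) = !parityW (brgc n ⟨q, by omega⟩) :=
    fun j hj h₁ h₂ a ha => hybrid_natAdd_eq_not_parityW hq <|
      (hblock a ha).imp (And.imp_right fun hm => by simp only; omega)
        (And.imp_right fun hm => by simp only; omega)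
  show _ ≤ _ ∧ _ ≤ _
  rcases hgray with hgray | hgray
  · have ht := le_thermoDecode_of_forall_true
      (u := unaryPart (parityW (brgc n ⟨q, by omega⟩)) y) (a := r₁) (by omega) (by omega) hr
      fun j h₁ h₂ => unaryPart_eq_of_mem_res hy hI (by omega)
        fun a ha => by rw [hwindow j (by omega) h₁ h₂ a ha, Bool.xor_true]
    have := thermoDecode_le k (unaryPart (parityW (brgc n ⟨q, by omega⟩)) y)
    rw [hybridDecode_val_of_grayPart_eq hgray]
    simp only
    omega
  · have ht := thermoDecode_le_of_forall_false (k := k)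
      (u := unaryPart (parityW (brgc n ⟨q + 1, hq⟩)) y) (a := r₁) (b := r)
      (by omega) (by omega)
      fun j h₁ h₂ => unaryPart_eq_of_mem_res hy hI (by omega)
        fun a ha => by rw [hwindow j (by omega) h₁ h₂ a ha, parityW_brgc_succ,
          Bool.xor_false]
    rw [hybridDecode_val_of_grayPart_eq hgray]
    simp only
    rw [Nat.succ_mul]
    omega

theorem hybridDecode_mem_intvl {i p : ℕ} (hp : p ≤ (k + 1) / 2) (hi : i + p < 2 ^ n * (k + 1))
    (hy : y ∈ res (extCW (hybrid n k) (intvl (2 ^ n * (k + 1)) i p))) :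
    hybridDecode n k y ∈ intvl (2 ^ n * (k + 1)) i p := by
  obtain ⟨q, r, hr, rfl⟩ : ∃ q r, r ≤ k ∧ i = q * (k + 1) + r :=
    ⟨i / (k + 1), i % (k + 1), Nat.le_of_lt_succ (Nat.mod_lt _ k.succ_pos),
      (Nat.div_add_mod' i (k + 1)).symm⟩
  rcases le_or_gt (r + p) k with hrp | hrp
  · have hq : q * (k + 1) < 2 ^ n * (k + 1) := by omega
    exact hybridDecode_mem_intvl_of_add_le (Nat.lt_of_mul_lt_mul_right hq) hrp hy
  · have hq : (q + 1) * (k + 1) < 2 ^ n * (k + 1) := by rw [Nat.succ_mul]; omega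
    exact hybridDecode_mem_intvl_of_lt_add (Nat.lt_of_mul_lt_mul_right hq) hr hp hrp hy

end Hybrid

theorem hybrid_recoverable_general (n k : ℕ) :
    Recoverable (hybrid n k) ((k+1)/2) := by
  refine ⟨hybridDecode n k, fun v => ?_, fun i p hp hi y hy => hybridDecode_mem_intvl hp hi hy⟩
  have hv : v ∈ intvl (2 ^ n * (k + 1)) v 0 := ⟨le_rfl, le_rfl⟩
  obtain ⟨h₁, h₂⟩ := hybridDecode_mem_intvl (Nat.zero_le _) v.isLt (mem_res_extCW hv)
  exact Fin.ext (le_antisymm h₂ h₁)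

/-- The hybrid code `γ^h_{n,k}` is `⌈k/2⌉`-recoverable. -/
theorem hybrid_recoverable (n k : ℕ) (hk : 1 ≤ k) (hnk : k ≤ n) :
    Recoverable (hybrid n k) ((k+1)/2) :=
  hybrid_recoverable_general n k
end

section
/- No code beyond the recoverability bound is k-recoverable: for k, n ∈ ℕ with k ≤ n, if M > 2^{n-k}·(k+1), then no code γ : {0,...,M-1} → {0,1}^n is k-recoverable. -/
private lemma extCW_some {M n : ℕ} {γ : Fin M → Fin n → Bool} {I : Set (Fin M)}
    {j : Fin n} {b : Bool} (h : extCW γ I j = some b) :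
    ∀ a ∈ I, γ a j = b := by
  unfold extCW at h
  split_ifs at h with h1 h2
  · simp only [Option.some.injEq] at h; subst h; exact h1
  · simp only [Option.some.injEq] at h; subst h; exact h2

private lemma extCW_none_of {M n : ℕ} {γ : Fin M → Fin n → Bool} {I : Set (Fin M)}
    {j : Fin n} {a a' : Fin M} (ha : a ∈ I) (ha' : a' ∈ I) (hne : γ a j ≠ γ a' j) :
    extCW γ I j = none := by
  unfold extCW
  split_ifs with h1 h2
  · exact absurd (by rw [h1 a ha, h1 a' ha']) hne
  · exact absurd (by rw [h2 a ha, h2 a' ha']) hne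
  · rfl

private lemma extCW_none_mono {M n : ℕ} {γ : Fin M → Fin n → Bool} {I I' : Set (Fin M)}
    (hI : I ⊆ I') {j : Fin n} (h : extCW γ I j = none) : extCW γ I' j = none := by
  unfold extCW at h ⊢
  split_ifs at h with h1 h2
  split_ifs with g1 g2
  · exact absurd (fun a ha => g1 a (hI ha)) h1
  · exact absurd (fun a ha => g2 a (hI ha)) h2
  · rfl

/-- Beyond the recoverability bound there is no `k`-recoverable code:
if `M > 2^(n-k) * (k+1)` then no `n`-bit code on domain `{0,...,M-1}` is
`k`-recoverable. -/
theorem no_recoverable_beyond_bound {M n k : ℕ} (hkn : k ≤ n)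
    (hM : 2^(n-k) * (k+1) < M)
    (γ : Fin M → Fin n → Bool) (hinj : Function.Injective γ) :
    ¬ Recoverable γ k := by
  classical
  rintro ⟨dec, hdec1, hdec2⟩
  set E := 2^(n-k) with hE
  -- Step 1: the superposition of an interval ⟨i, i+p⟩ has at least p metastable bits.
  have growth : ∀ p, p ≤ k → ∀ i, i + k < M →
      p ≤ (Finset.univ.filter (fun j => extCW γ (intvl M i p) j = none)).card := by
    intro p
    induction p with
    | zero => intro _ i _; exact Nat.zero_le _
    | succ p ih =>
      intro hpk i hik
      have hp : p ≤ k := Nat.le_of_succ_le hpk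
      have hiM : i < M := by omega
      have hvM : i + p + 1 < M := by omega
      set v : Fin M := ⟨i + p + 1, hvM⟩ with hv
      set a0 : Fin M := ⟨i, hiM⟩ with ha0
      have hnot : γ v ∉ res (extCW γ (intvl M i p)) := by
        intro hin
        have h2 := hdec2 i p hp (by omega) (γ v) hin
        rw [hdec1] at h2
        simp only [intvl, Set.mem_setOf_eq] at h2
        obtain ⟨_, hb⟩ := h2
        have hb' : i + p + 1 ≤ i + p := hb
        omega
      have hex : ∃ j b, extCW γ (intvl M i p) j = some b ∧ γ v j ≠ b := by
        by_contra hcon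
        push_neg at hcon
        exact hnot (fun j b hb => hcon j b hb)
      obtain ⟨j, b, hsome, hne⟩ := hex
      have ha0p : a0 ∈ intvl M i p := ⟨le_rfl, Nat.le_add_right i p⟩
      have ha0p1 : a0 ∈ intvl M i (p+1) := ⟨le_rfl, Nat.le_add_right i (p+1)⟩
      have hvp1 : v ∈ intvl M i (p+1) := ⟨Nat.le_add_right i (p+1), le_rfl⟩
      have hγa0 : γ a0 j = b := extCW_some hsome a0 ha0p
      have hnone : extCW γ (intvl M i (p+1)) j = none :=
        extCW_none_of ha0p1 hvp1 (by rw [hγa0]; exact hne.symm)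
      have hsub : (Finset.univ.filter (fun j => extCW γ (intvl M i p) j = none))
          ⊆ (Finset.univ.filter (fun j => extCW γ (intvl M i (p+1)) j = none)) := by
        intro j' hj'
        simp only [Finset.mem_filter, Finset.mem_univ, true_and] at hj' ⊢
        refine extCW_none_mono ?_ hj'
        intro a ha
        obtain ⟨ha1, ha2⟩ := ha
        exact ⟨ha1, by omega⟩
      have hjmem : j ∈ (Finset.univ.filter
          (fun j => extCW γ (intvl M i (p+1)) j = none)) := by
        simp only [Finset.mem_filter, Finset.mem_univ, true_and]
        exact hnone
      have hjnot : j ∉ (Finset.univ.filter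
          (fun j => extCW γ (intvl M i p) j = none)) := by
        simp only [Finset.mem_filter, Finset.mem_univ, true_and, hsome]
        simp
      have hss := Finset.card_lt_card
        ((Finset.ssubset_iff_of_subset hsub).mpr ⟨j, hjmem, hjnot⟩)
      have := ih hp i hik
      omega
  -- Step 2: each resolution set of ⟨i, i+k⟩ has at least 2^k elements.
  have resCard : ∀ i, i + k < M →
      2^k ≤ (Finset.univ.filter
        (fun y => y ∈ res (extCW γ (intvl M i k)))).card := by
    intro i hik
    set x := extCW γ (intvl M i k) with hx
    have hmet := growth k le_rfl i hik
    set Rf := Finset.univ.filter (fun y => y ∈ res x) with hRf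
    have hinj2 : Function.Injective
        (fun c : ({j : Fin n // x j = none} → Bool) =>
          (⟨fun j => if h : x j = none then c ⟨j, h⟩ else (x j).getD false, by
            simp only [hRf, Finset.mem_filter, Finset.mem_univ, true_and, res,
              Set.mem_setOf_eq]
            intro j b hb
            rw [dif_neg (by simp [hb]), hb]
            rfl⟩ : {y // y ∈ Rf})) := by
      intro c c' hcc
      funext jh
      obtain ⟨j, hj⟩ := jh
      have := congrFun (congrArg Subtype.val hcc) j
      simpa [dif_pos hj] using this
    have hcard := Fintype.card_le_of_injective _ hinj2
    have hsubcard : k ≤ Fintype.card {j : Fin n // x j = none} := by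
      rw [Fintype.card_subtype]
      exact hmet
    calc 2^k ≤ 2 ^ Fintype.card {j : Fin n // x j = none} :=
          Nat.pow_le_pow_right (by norm_num) hsubcard
      _ ≤ Fintype.card {y // y ∈ Rf} := by
          simpa [Fintype.card_fun] using hcard
      _ = Rf.card := Fintype.card_coe Rf
  -- Step 3: disjoint intervals give disjoint resolution sets.
  have hbound : ∀ t, t < E → t*(k+1) + k < M := by
    intro t ht
    have h1 : t + 1 ≤ E := ht
    have h2 : (t+1)*(k+1) ≤ E*(k+1) := mul_le_mul_left h1 (k+1)
    nlinarith
  set Rf : ℕ → Finset (Fin n → Bool) :=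
    fun i => Finset.univ.filter (fun y => y ∈ res (extCW γ (intvl M i k))) with hRfdef
  have hdisj : ∀ t ∈ Finset.range E, ∀ t' ∈ Finset.range E, t ≠ t' →
      Disjoint (Rf (t*(k+1))) (Rf (t'*(k+1))) := by
    intro t ht t' ht' hne
    rw [Finset.disjoint_left]
    intro y hy hy'
    simp only [hRfdef, Finset.mem_filter, Finset.mem_univ, true_and] at hy hy'
    have ha := hdec2 (t*(k+1)) k le_rfl (hbound t (Finset.mem_range.mp ht)) y hy
    have hb := hdec2 (t'*(k+1)) k le_rfl (hbound t' (Finset.mem_range.mp ht')) y hy'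
    simp only [intvl, Set.mem_setOf_eq] at ha hb
    obtain ⟨ha1, ha2⟩ := ha
    obtain ⟨hb1, hb2⟩ := hb
    apply hne
    rcases Nat.lt_trichotomy t t' with h | h | h
    · exfalso
      have h1 : t + 1 ≤ t' := h
      have h2 := mul_le_mul_left h1 (k+1)
      nlinarith
    · exact h
    · exfalso
      have h1 : t' + 1 ≤ t := h
      have h2 := mul_le_mul_left h1 (k+1)
      nlinarith
  -- Step 4: the disjoint union covers all of {0,1}^n.
  set B := (Finset.range E).biUnion (fun t => Rf (t*(k+1))) with hB
  have hcardB : 2^n ≤ B.card := by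
    rw [hB, Finset.card_biUnion hdisj]
    have hlow : ∀ t ∈ Finset.range E, 2^k ≤ (Rf (t*(k+1))).card := fun t ht =>
      resCard _ (hbound t (Finset.mem_range.mp ht))
    calc 2^n = E * 2^k := by rw [hE, ← pow_add, Nat.sub_add_cancel hkn]
      _ = (Finset.range E).card * 2^k := by rw [Finset.card_range]
      _ ≤ ∑ t ∈ Finset.range E, (Rf (t*(k+1))).card := by
          rw [← smul_eq_mul]
          exact Finset.card_nsmul_le_sum _ _ _ hlow
  have hBuniv : B = Finset.univ := by
    apply Finset.eq_of_subset_of_card_le (Finset.subset_univ B)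
    have hcu : (Finset.univ : Finset (Fin n → Bool)).card = 2^n := by
      rw [Finset.card_univ]
      simp [Fintype.card_fun]
    rw [hcu]
    exact hcardB
  -- Step 5: the codeword of value E*(k+1) must lie in some resolution set,
  -- but decodes outside all the intervals used. Contradiction.
  set vM : Fin M := ⟨E*(k+1), hM⟩ with hvM
  have hmemB : γ vM ∈ B := hBuniv ▸ Finset.mem_univ _
  rw [hB, Finset.mem_biUnion] at hmemB
  obtain ⟨t, ht, hmem⟩ := hmemB
  simp only [hRfdef, Finset.mem_filter, Finset.mem_univ, true_and] at hmem
  have hfin := hdec2 (t*(k+1)) k le_rfl (hbound t (Finset.mem_range.mp ht)) _ hmem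
  rw [hdec1] at hfin
  simp only [intvl, Set.mem_setOf_eq] at hfin
  obtain ⟨h1, h2⟩ := hfin
  have h2' : E*(k+1) ≤ t*(k+1) + k := h2
  have ht' : t + 1 ≤ E := Finset.mem_range.mp ht
  have h3 := mul_le_mul_left ht' (k+1)
  nlinarith
end
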